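/- Let φ : ℝⁿ → ℝ ∪ {±∞} be a function and x̄ ∈ dom φ. Then the steepest descent rate gr↓φ(x̄) is strictly positive if and only if 0 belongs to the interior of the Fréchet subdifferential ∂̂φ(x̄). -/

import Mathlib

open Filter Topology Metric Set RealInnerProductSpace

/-- The steepest descent rate of an extended-real-valued function `φ` at `xb`:
`liminf_{x → xb, x ≠ xb} (φ x − φ xb)/‖x − xb‖`. -/
noncomputable def steepestDescentRate {n : ℕ}
    (φ : EuclideanSpace ℝ (Fin n) → EReal) (xb : EuclideanSpace ℝ (Fin n)) : EReal :=
  Filter.liminf (fun x => (φ x - φ xb) * ((‖x - xb‖⁻¹ : ℝ) : EReal)) (𝓝[≠] xb)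

/-- The Fréchet subdifferential of `φ : ℝⁿ → ℝ ∪ {±∞}` at `xb`:
`{x* : liminf_{x→xb, x≠xb} (φ x − φ xb − ⟨x*, x − xb⟩)/‖x − xb‖ ≥ 0}`. -/
noncomputable def frechetSubdiff {n : ℕ}
    (φ : EuclideanSpace ℝ (Fin n) → EReal) (xb : EuclideanSpace ℝ (Fin n)) :
    Set (EuclideanSpace ℝ (Fin n)) :=
  {p | (0 : EReal) ≤ Filter.liminf
    (fun x => (φ x - φ xb - ((⟪p, x - xb⟫ : ℝ) : EReal)) * ((‖x - xb‖⁻¹ : ℝ) : EReal))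
    (𝓝[≠] xb)}

/-!
With `d x = ‖x - xb‖⁻¹ • (x - xb)`, the Fréchet quotient of `p` is the descent quotient minus
`⟪p, d x⟫`, and `‖d x‖ = 1`. So if the descent quotient is eventually above `r > 0`, every `p`
with `‖p‖ < r` is a Fréchet subgradient. Conversely, if the ball of radius `ε` consists of
subgradients, compactness of the unit sphere gives finitely many unit vectors `u` such that every
unit vector `v` has `⟪u, v⟫ > 1/2` for one of them; testing the quotient against the finitely many
subgradients `(ε/2) • u` bounds it eventually below by `ε/8`.
-/

section

variable {α E : Type*} [NormedAddCommGroup E] [InnerProductSpace ℝ E]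

lemma exists_finite_subset_sphere_half_lt_inner [FiniteDimensional ℝ E] :
    ∃ T ⊆ sphere (0 : E) 1, T.Finite ∧ ∀ v ∈ sphere (0 : E) 1, ∃ u ∈ T, 1 / 2 < ⟪u, v⟫ := by
  obtain ⟨T, hT, hTfin, hcover⟩ := (isCompact_sphere (0 : E) 1).elim_finite_subcover_image
    (c := fun u => ball u 1) (fun _ _ => isOpen_ball)
    (fun v hv => mem_iUnion₂.2 ⟨v, hv, mem_ball_self one_pos⟩)
  refine ⟨T, hT, hTfin, fun v hv => ?_⟩
  obtain ⟨u, huT, hvu⟩ := mem_iUnion₂.1 (hcover hv)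
  refine ⟨u, huT, ?_⟩
  have hu : ‖u‖ = 1 := mem_sphere_zero_iff_norm.1 (hT huT)
  have hv : ‖v‖ = 1 := mem_sphere_zero_iff_norm.1 hv
  have hdist : ‖v - u‖ < 1 := mem_ball_iff_norm.1 hvu
  -- `‖v - u‖² = 2 - 2⟪u, v⟫` for unit vectors
  have hsq := norm_sub_sq_real v u
  rw [hu, hv, real_inner_comm] at hsq
  nlinarith [norm_nonneg (v - u)]

variable {g : α → EReal} {d : α → E} {l : Filter α}

lemma ball_subset_of_lt_liminf {r : ℝ} (hr : (r : EReal) < liminf g l)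
    (hd : ∀ᶠ x in l, ‖d x‖ ≤ 1) :
    ball (0 : E) r ⊆ {p | 0 ≤ liminf (fun x => g x - ((⟪p, d x⟫ : ℝ) : EReal)) l} := by
  intro p hp
  rw [mem_ofPred_eq]
  refine le_liminf_of_le (by isBoundedDefault) ?_
  filter_upwards [eventually_lt_of_lt_liminf hr, hd] with x hgx hdx
  have hinner : ⟪p, d x⟫ ≤ r := calc
    ⟪p, d x⟫ ≤ ‖p‖ * ‖d x‖ := real_inner_le_norm p (d x)
    _ ≤ ‖p‖ := mul_le_of_le_one_right (norm_nonneg p) hdx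
    _ ≤ r := (mem_ball_zero_iff.1 hp).le
  rw [EReal.sub_nonneg (.inr (EReal.coe_ne_top _)) (.inr (EReal.coe_ne_bot _))]
  exact (EReal.coe_le_coe_iff.2 hinner).trans hgx.le

lemma pos_liminf_of_ball_subset [FiniteDimensional ℝ E] {ε : ℝ} (hε : 0 < ε)
    (hball : ball (0 : E) ε ⊆ {p | 0 ≤ liminf (fun x => g x - ((⟪p, d x⟫ : ℝ) : EReal)) l})
    (hd : ∀ᶠ x in l, ‖d x‖ = 1) :
    0 < liminf g l := by
  obtain ⟨T, hT, hTfin, hnet⟩ := exists_finite_subset_sphere_half_lt_inner (E := E)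
  have hslack : ∀ u ∈ T, ∀ᶠ x in l,
      ((-(ε / 8) : ℝ) : EReal) < g x - ((⟪(ε / 2) • u, d x⟫ : ℝ) : EReal) := by
    intro u hu
    have hmem : (ε / 2) • u ∈ ball (0 : E) ε := by
      rw [mem_ball_zero_iff, norm_smul, mem_sphere_zero_iff_norm.1 (hT hu), Real.norm_eq_abs,
        abs_of_pos (half_pos hε)]
      linarith
    refine eventually_lt_of_lt_liminf (lt_of_lt_of_le ?_ (hball hmem))
    exact EReal.coe_lt_coe_iff.2 (by linarith)
  have hbound : ∀ᶠ x in l, ((ε / 8 : ℝ) : EReal) < g x := by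
    filter_upwards [(eventually_all_finite hTfin).2 hslack, hd] with x hx hdx
    obtain ⟨u, hu, hud⟩ := hnet (d x) (mem_sphere_zero_iff_norm.2 hdx)
    have h := (EReal.lt_sub_iff_add_lt (.inr (EReal.coe_ne_top _))
      (.inr (EReal.coe_ne_bot _))).1 (hx u hu)
    rw [← EReal.coe_add, real_inner_smul_left] at h
    exact lt_of_le_of_lt (EReal.coe_le_coe_iff.2 (by nlinarith)) h
  calc (0 : EReal) < ((ε / 8 : ℝ) : EReal) := EReal.coe_pos.2 (by linarith)
    _ ≤ liminf g l := le_liminf_of_le (by isBoundedDefault) (hbound.mono fun _ h => h.le)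

end

lemma frechetSubdiff_eq {n : ℕ} (φ : EuclideanSpace ℝ (Fin n) → EReal)
    (xb : EuclideanSpace ℝ (Fin n)) :
    frechetSubdiff φ xb = {p | 0 ≤ liminf (fun x => (φ x - φ xb) * ((‖x - xb‖⁻¹ : ℝ) : EReal)
      - ((⟪p, ‖x - xb‖⁻¹ • (x - xb)⟫ : ℝ) : EReal)) (𝓝[≠] xb)} := by
  ext p
  simp only [frechetSubdiff, mem_ofPred_eq, EReal.sub_mul_of_nonneg_of_ne_top
    (EReal.coe_nonneg.2 (inv_nonneg.2 (norm_nonneg _))) (EReal.coe_ne_top _), ← EReal.coe_mul,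
    real_inner_smul_right, mul_comm]

theorem descentRate_pos_iff_zero_mem_int_frechetSubdiff_general {n : ℕ}
    (φ : EuclideanSpace ℝ (Fin n) → EReal) (xb : EuclideanSpace ℝ (Fin n)) :
    (0 : EReal) < steepestDescentRate φ xb ↔
      (0 : EuclideanSpace ℝ (Fin n)) ∈ interior (frechetSubdiff φ xb) := by
  have hdir : ∀ᶠ x in 𝓝[≠] xb, ‖‖x - xb‖⁻¹ • (x - xb)‖ = 1 :=
    eventually_nhdsWithin_of_forall fun x hx => norm_smul_inv_norm (sub_ne_zero.2 hx)
  rw [frechetSubdiff_eq, steepestDescentRate]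
  constructor
  · intro hpos
    obtain ⟨r, hr0, hr⟩ := EReal.exists_between_coe_real hpos
    exact interior_maximal (ball_subset_of_lt_liminf hr (hdir.mono fun _ h => h.le)) isOpen_ball
      (mem_ball_self (EReal.coe_pos.1 hr0))
  · intro h0
    obtain ⟨ε, hε, hball⟩ := Metric.mem_nhds_iff.1 (mem_interior_iff_mem_nhds.1 h0)
    exact pos_liminf_of_ball_subset hε hball hdir

/-- For `φ : ℝⁿ → ℝ ∪ {±∞}` and `xb ∈ dom φ`, the steepest descent
rate `gr↓φ(xb)` is strictly positive iff `0` belongs to the interior of the Fréchet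
subdifferential `∂̂φ(xb)`. -/
theorem descentRate_pos_iff_zero_mem_int_frechetSubdiff {n : ℕ}
    (φ : EuclideanSpace ℝ (Fin n) → EReal) (xb : EuclideanSpace ℝ (Fin n))
    (htop : φ xb ≠ ⊤) (hbot : φ xb ≠ ⊥) :
    (0 : EReal) < steepestDescentRate φ xb ↔
      (0 : EuclideanSpace ℝ (Fin n)) ∈ interior (frechetSubdiff φ xb) :=
  descentRate_pos_iff_zero_mem_int_frechetSubdiff_general φ xb
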